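/- Let p be an odd prime, n ≥ 3, and M_n(p) as above. If h ∈ M_n(p) does not lie in the subgroup ⟨a^p, b⟩, then the centralizer of h in M_n(p) is the cyclic group ⟨h⟩, which has index p. -/

import Mathlib

/-- Relations for the modular maximal-cyclic group
`M_n(p) = ⟨a, b ∣ a^(p^(n-1)) = 1, b^p = 1, b⁻¹ a b = a^(p^(n-2)+1)⟩`. -/
def Mrels (p n : ℕ) : Set (FreeGroup (Fin 2)) :=
  {FreeGroup.of 0 ^ p ^ (n - 1), FreeGroup.of 1 ^ p,
    (FreeGroup.of 1)⁻¹ * FreeGroup.of 0 * FreeGroup.of 1 *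
      (FreeGroup.of 0 ^ (p ^ (n - 2) + 1))⁻¹}

/-- The modular maximal-cyclic group `M_n(p)`, as a presented group. -/
abbrev Mgrp (p n : ℕ) := PresentedGroup (Mrels p n)

/-- The generator `a` of `M_n(p)`. -/
def Ma (p n : ℕ) : Mgrp p n := PresentedGroup.of 0

/-- The generator `b` of `M_n(p)`. -/
def Mb (p n : ℕ) : Mgrp p n := PresentedGroup.of 1

/-
Write `n = k + 3`. The presentation maps isomorphically onto a group of pairs
`(x, y) ∈ ZMod (p^(k+2)) × ZMod p` standing for `b^y a^x`, and `h` outside `⟨a^p, b⟩` means that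
`x` is prime to `p`. For odd `p` the cross terms of `h^p` carry the factor `p.choose 2 ≡ 0 [MOD p]`,
so `h^p = a^(p x)`; hence `h` has order `p^(k+2)` and `⟨h⟩` has index `p`. The centralizer of `h`
contains `⟨h⟩` but not `b`, and a proper subgroup containing a subgroup of prime index equals it.
-/

open Subgroup in
theorem Subgroup.centralizer_eq_zpowers_of_index_prime {G : Type*} [Group G] {g x : G}
    (hidx : (zpowers g).index.Prime) (hgx : ¬Commute g x) :
    centralizer {g} = zpowers g := by
  have hle : zpowers g ≤ centralizer {g} :=
    zpowers_le.mpr (mem_centralizer_singleton_iff.mpr rfl)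
  have hne : (centralizer {g}).index ≠ 1 := fun h => by
    have hx : x ∈ centralizer {g} := index_eq_one.mp h ▸ mem_top x
    exact hgx (mem_centralizer_singleton_iff.mp hx).symm
  obtain hone | heq := (Nat.dvd_prime hidx).mp (index_dvd_of_le hle)
  · exact absurd hone hne
  · have hrel := relIndex_mul_index hle
    rw [heq, Nat.mul_eq_right hidx.ne_zero] at hrel
    exact le_antisymm (relIndex_eq_one.mp hrel) hle

theorem one_add_pow_of_mul_self_eq_zero {R : Type*} [CommRing R] {ε : R} (hε : ε * ε = 0)
    (j : ℕ) : (1 + ε) ^ j = 1 + j * ε := by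
  induction j with
  | zero => simp
  | succ j ih => rw [pow_succ, ih]; push_cast; linear_combination (j : R) * hε

namespace Mgrp

section Socle

variable (p k : ℕ)

def reduce : ZMod (p ^ (k + 2)) →+* ZMod p := ZMod.castHom (dvd_pow_self p (by omega)) _

/-- `z ↦ p^(k+1) z`, an isomorphism of `ZMod p` onto the socle of `ZMod (p^(k+2))`. -/
def socle : ZMod p →+ ZMod (p ^ (k + 2)) :=
  ZMod.lift p ⟨zmultiplesHom _ (p ^ (k + 1) : ℕ), by
    rw [zmultiplesHom_apply, natCast_zsmul, nsmul_eq_mul, ← Nat.cast_mul, ← pow_succ',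
      ZMod.natCast_self]⟩

variable {p k}

theorem socle_intCast (i : ℤ) : socle p k i = i * p ^ (k + 1) := by
  simp [socle]

theorem socle_natCast (i : ℕ) : socle p k i = i * p ^ (k + 1) := by
  simpa using socle_intCast (p := p) (k := k) i

theorem socle_one : socle p k 1 = p ^ (k + 1) := by
  simpa using socle_natCast (p := p) (k := k) 1

theorem natCast_pow_mul_self_eq_zero :
    (p : ZMod (p ^ (k + 2))) ^ (k + 1) * (p : ZMod (p ^ (k + 2))) ^ (k + 1) = 0 := by
  rw [← pow_add, ← Nat.cast_pow, ZMod.natCast_eq_zero_iff]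
  exact pow_dvd_pow p (by omega)

variable [NeZero p]

theorem socle_reduce (x : ZMod (p ^ (k + 2))) : socle p k (reduce p k x) = p ^ (k + 1) * x := by
  conv_lhs => rw [← ZMod.natCast_zmod_val x, map_natCast, socle_natCast, ZMod.natCast_val,
    ZMod.cast_id', id, mul_comm]

theorem socle_reduce_mul (x : ZMod (p ^ (k + 2))) (z : ZMod p) :
    socle p k (reduce p k x * z) = p ^ (k + 1) * x * z.val := by
  conv_lhs =>
    rw [← ZMod.natCast_zmod_val z, ← map_natCast (reduce p k), ← map_mul, socle_reduce]
  rw [mul_assoc]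

theorem reduce_socle (z : ZMod p) : reduce p k (socle p k z) = 0 := by
  rw [← ZMod.natCast_zmod_val z, socle_natCast, map_mul, map_natCast, map_pow, map_natCast,
    ZMod.natCast_self, zero_pow (by omega), mul_zero]

theorem socle_injective : Function.Injective (socle p k) := by
  refine (ZMod.lift_injective _).mpr fun m hm => ?_
  rw [zmultiplesHom_apply, zsmul_eq_mul, Nat.cast_pow, ← Int.cast_natCast, ← Int.cast_pow,
    ← Int.cast_mul, ZMod.intCast_zmod_eq_zero_iff_dvd, Nat.cast_pow, pow_succ'] at hm
  rw [ZMod.intCast_zmod_eq_zero_iff_dvd]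
  exact (mul_dvd_mul_iff_right (pow_ne_zero _ (Int.natCast_ne_zero.mpr (NeZero.ne p)))).mp hm

end Socle

/-- `M_{k+3}(p)`, with `(x, y) * (x', y') = (x + x' + p^(k+1) x y', y + y')`; the pair `(x, y)`
stands for `b^y a^x`. -/
@[ext]
structure Model (p k : ℕ) where
  x : ZMod (p ^ (k + 2))
  y : ZMod p

namespace Model

variable {p k : ℕ}

instance : One (Model p k) := ⟨⟨0, 0⟩⟩

instance : Mul (Model p k) :=
  ⟨fun g h => ⟨g.x + h.x + socle p k (reduce p k g.x * h.y), g.y + h.y⟩⟩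

instance : Inv (Model p k) := ⟨fun g => ⟨-g.x + socle p k (reduce p k g.x * g.y), -g.y⟩⟩

@[simp] theorem one_x : (1 : Model p k).x = 0 := rfl
@[simp] theorem one_y : (1 : Model p k).y = 0 := rfl
@[simp] theorem mul_x (g h : Model p k) :
    (g * h).x = g.x + h.x + socle p k (reduce p k g.x * h.y) := rfl
@[simp] theorem mul_y (g h : Model p k) : (g * h).y = g.y + h.y := rfl
@[simp] theorem inv_x (g : Model p k) : g⁻¹.x = -g.x + socle p k (reduce p k g.x * g.y) := rfl
@[simp] theorem inv_y (g : Model p k) : g⁻¹.y = -g.y := rfl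

theorem card_eq : Nat.card (Model p k) = p ^ (k + 3) := by
  let e : Model p k ≃ ZMod (p ^ (k + 2)) × ZMod p :=
    ⟨fun g => (g.x, g.y), fun z => ⟨z.1, z.2⟩, fun _ => rfl, fun _ => rfl⟩
  rw [Nat.card_congr e, Nat.card_prod, Nat.card_zmod, Nat.card_zmod, ← pow_succ]

variable (p k) in
def a : Model p k := ⟨1, 0⟩

variable (p k) in
def b : Model p k := ⟨0, 1⟩

variable [NeZero p]

instance : Group (Model p k) :=
  Group.ofLeftAxioms
    (fun g h l => by ext <;> simp [reduce_socle, add_mul, mul_add] <;> abel)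
    (fun g => by ext <;> simp)
    (fun g => by ext <;> simp [reduce_socle])

theorem pow_eq (g : Model p k) (j : ℕ) :
    g ^ j = ⟨j • g.x + socle p k (j.choose 2 • (reduce p k g.x * g.y)), j • g.y⟩ := by
  induction j with
  | zero => ext <;> simp
  | succ j ih =>
    have hchoose : (j + 1).choose 2 = j.choose 2 + j := by
      rw [Nat.choose_succ_succ', Nat.choose_one_right, add_comm]
    rw [pow_succ, ih]
    ext
    · simp only [mul_x, map_add, map_nsmul, reduce_socle, smul_zero, add_zero, smul_mul_assoc,
        hchoose, add_nsmul, succ_nsmul]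
      abel
    · exact (succ_nsmul g.y j).symm

theorem mk_zero_pow (x : ZMod (p ^ (k + 2))) (j : ℕ) :
    (⟨x, 0⟩ : Model p k) ^ j = ⟨j • x, 0⟩ := by
  simp [pow_eq]

theorem a_pow (j : ℕ) : a p k ^ j = ⟨j, 0⟩ := by
  simp [a, mk_zero_pow]

theorem b_pow (j : ℕ) : b p k ^ j = ⟨0, j⟩ := by
  simp [b, pow_eq]

theorem b_inv_mul_a_mul_b : (b p k)⁻¹ * a p k * b p k = a p k ^ (p ^ (k + 1) + 1) := by
  rw [a_pow]
  ext <;> simp [a, b, socle_one, add_comm]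

theorem b_pow_mul_a_pow (g : Model p k) : b p k ^ g.y.val * a p k ^ g.x.val = g := by
  ext <;> simp [a_pow, b_pow]

theorem commute_iff {g h : Model p k} :
    Commute g h ↔ reduce p k g.x * h.y = reduce p k h.x * g.y := by
  rw [Commute, SemiconjBy, Model.ext_iff, mul_x, mul_x, add_comm h.x, mul_y, mul_y, add_comm h.y]
  simp [socle_injective.eq_iff]

theorem not_commute_b {g : Model p k} (hg : reduce p k g.x ≠ 0) : ¬Commute g (b p k) := by
  simpa [commute_iff, b] using hg

section Prime

variable [Fact p.Prime]

theorem pow_prime (hodd : Odd p) (g : Model p k) : g ^ p = ⟨p • g.x, 0⟩ := by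
  have hp : p.Prime := Fact.out
  have htwo : 2 < p := hp.two_le.lt_of_ne (by rintro rfl; norm_num at hodd)
  have hchoose : (p.choose 2 : ZMod p) = 0 :=
    (ZMod.natCast_eq_zero_iff _ _).mpr (hp.dvd_choose_self two_ne_zero htwo)
  rw [pow_eq]
  ext <;> simp [hchoose]

theorem orderOf_eq (hodd : Odd p) {g : Model p k} (hg : reduce p k g.x ≠ 0) :
    orderOf g = p ^ (k + 2) := by
  have hpow (j : ℕ) : g ^ (p * j) = ⟨(p * j) • g.x, 0⟩ := by
    rw [pow_mul, pow_prime hodd, mk_zero_pow, smul_smul, mul_comm]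
  apply orderOf_eq_prime_pow
  · rw [pow_succ', hpow, Model.ext_iff]
    simpa [← pow_succ', ← socle_reduce, map_eq_zero_iff _ socle_injective] using hg
  · rw [pow_succ', hpow, ← pow_succ']
    ext <;> simp

theorem index_zpowers (hodd : Odd p) {g : Model p k} (hg : reduce p k g.x ≠ 0) :
    (Subgroup.zpowers g).index = p := by
  have hcard := (Subgroup.zpowers g).card_mul_index
  rw [Nat.card_zpowers, orderOf_eq hodd hg, card_eq, pow_succ' _ (k + 2), mul_comm] at hcard
  exact Nat.eq_of_mul_eq_mul_right (pow_pos (Fact.out : p.Prime).pos _) hcard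

end Prime

end Model

section Presented

variable {p k : ℕ}

theorem Ma_pow_eq_one : Ma p (k + 3) ^ p ^ (k + 2) = 1 := by
  rw [Ma, PresentedGroup.of, ← map_pow]
  exact PresentedGroup.one_of_mem (Set.mem_insert _ _)

theorem Mb_pow_eq_one : Mb p (k + 3) ^ p = 1 := by
  rw [Mb, PresentedGroup.of, ← map_pow]
  exact PresentedGroup.one_of_mem (Set.mem_insert_of_mem _ (Set.mem_insert _ _))

theorem Mb_inv_mul_Ma_mul_Mb :
    (Mb p (k + 3))⁻¹ * Ma p (k + 3) * Mb p (k + 3) = Ma p (k + 3) ^ (p ^ (k + 1) + 1) := by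
  rw [← mul_inv_eq_one, Ma, Mb, PresentedGroup.of, PresentedGroup.of, ← map_pow, ← map_inv,
    ← map_mul, ← map_mul, ← map_inv, ← map_mul]
  exact PresentedGroup.one_of_mem (Set.mem_insert_of_mem _ (Set.mem_insert_of_mem _ rfl))

theorem Mb_inv_mul_Ma_pow_mul_Mb (i : ℕ) :
    (Mb p (k + 3))⁻¹ * Ma p (k + 3) ^ i * Mb p (k + 3)
      = Ma p (k + 3) ^ (i * (p ^ (k + 1) + 1)) := by
  have hconj := conj_pow (a := (Mb p (k + 3))⁻¹) (b := Ma p (k + 3)) (i := i)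
  rw [inv_inv, Mb_inv_mul_Ma_mul_Mb] at hconj
  rw [← hconj, pow_mul']

theorem Ma_pow_mul_Mb_pow (i j : ℕ) :
    Ma p (k + 3) ^ i * Mb p (k + 3) ^ j
      = Mb p (k + 3) ^ j * Ma p (k + 3) ^ (i * (p ^ (k + 1) + 1) ^ j) := by
  induction j with
  | zero => simp
  | succ j ih =>
    rw [pow_succ, ← mul_assoc, ih, pow_succ _ j, ← mul_assoc i, ← Mb_inv_mul_Ma_pow_mul_Mb]
    group

end Presented

section Isomorphism

variable {p k : ℕ} [NeZero p]

variable (p k) in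
def toMgrp : Model p k →* Mgrp p (k + 3) :=
  MonoidHom.mk' (fun g => Mb p (k + 3) ^ g.y.val * Ma p (k + 3) ^ g.x.val) fun g h => by
    rw [mul_assoc, ← mul_assoc (Ma p (k + 3) ^ _), Ma_pow_mul_Mb_pow, mul_assoc, ← mul_assoc,
      ← pow_add, ← pow_add]
    congr 1
    · refine pow_eq_pow_of_modEq ((ZMod.natCast_eq_natCast_iff _ _ _).mp ?_) Mb_pow_eq_one
      simp
    · refine pow_eq_pow_of_modEq ((ZMod.natCast_eq_natCast_iff _ _ _).mp ?_) Ma_pow_eq_one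
      push_cast
      rw [add_comm _ 1, one_add_pow_of_mul_self_eq_zero natCast_pow_mul_self_eq_zero]
      simp [socle_reduce_mul]
      ring

theorem toMgrp_apply (g : Model p k) :
    toMgrp p k g = Mb p (k + 3) ^ g.y.val * Ma p (k + 3) ^ g.x.val :=
  rfl

theorem toMgrp_a : toMgrp p k (Model.a p k) = Ma p (k + 3) := by
  rw [toMgrp_apply, Model.a, ZMod.val_zero, pow_zero, one_mul,
    pow_eq_pow_of_modEq (b := 1) ((ZMod.natCast_eq_natCast_iff _ _ _).mp (by simp)) Ma_pow_eq_one,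
    pow_one]

theorem toMgrp_b : toMgrp p k (Model.b p k) = Mb p (k + 3) := by
  rw [toMgrp_apply, Model.b, ZMod.val_zero, pow_zero, mul_one,
    pow_eq_pow_of_modEq (b := 1) ((ZMod.natCast_eq_natCast_iff _ _ _).mp (by simp)) Mb_pow_eq_one,
    pow_one]

theorem lift_rels_eq_one :
    ∀ r ∈ Mrels p (k + 3), FreeGroup.lift ![Model.a p k, Model.b p k] r = 1 := by
  rintro r (rfl | rfl | rfl)
  · ext <;> simp [Model.a_pow]
  · ext <;> simp [Model.b_pow]
  · simp only [map_mul, map_inv, map_pow, FreeGroup.lift_apply_of]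
    exact mul_inv_eq_one.mpr Model.b_inv_mul_a_mul_b

variable (p k) in
def ofMgrp : Mgrp p (k + 3) →* Model p k := PresentedGroup.toGroup lift_rels_eq_one

theorem ofMgrp_Ma : ofMgrp p k (Ma p (k + 3)) = Model.a p k := PresentedGroup.toGroup.of _

theorem ofMgrp_Mb : ofMgrp p k (Mb p (k + 3)) = Model.b p k := PresentedGroup.toGroup.of _

variable (p k) in
def mulEquiv : Model p k ≃* Mgrp p (k + 3) :=
  (toMgrp p k).toMulEquiv (ofMgrp p k)
    (MonoidHom.ext fun g => by
      simp [toMgrp_apply, ofMgrp_Ma, ofMgrp_Mb, Model.b_pow_mul_a_pow])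
    (PresentedGroup.ext fun i => by
      fin_cases i
      · exact (congrArg (toMgrp p k) ofMgrp_Ma).trans toMgrp_a
      · exact (congrArg (toMgrp p k) ofMgrp_Mb).trans toMgrp_b)

theorem mulEquiv_mem_closure {g : Model p k} (hg : reduce p k g.x = 0) :
    mulEquiv p k g ∈ Subgroup.closure {Ma p (k + 3) ^ p, Mb p (k + 3)} := by
  obtain ⟨t, ht⟩ : p ∣ g.x.val := by
    rwa [← ZMod.natCast_eq_zero_iff, ← map_natCast (reduce p k), ZMod.natCast_zmod_val]
  rw [mulEquiv, MonoidHom.toMulEquiv_apply, toMgrp_apply, ht, pow_mul]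
  exact mul_mem (pow_mem (Subgroup.subset_closure (by simp)) _)
    (pow_mem (Subgroup.subset_closure (by simp)) _)

end Isomorphism

end Mgrp

theorem Mgrp_centralizer_outside (p n : ℕ) (hp : p.Prime) (hodd : Odd p) (hn : 3 ≤ n)
    (h : Mgrp p n) (hh : h ∉ Subgroup.closure {Ma p n ^ p, Mb p n}) :
    Subgroup.centralizer {h} = Subgroup.zpowers h ∧
      (Subgroup.zpowers h).index = p := by
  obtain ⟨k, rfl⟩ : ∃ k, n = k + 3 := ⟨n - 3, by omega⟩
  have : Fact p.Prime := ⟨hp⟩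
  let e := Mgrp.mulEquiv p k
  obtain ⟨g, rfl⟩ := e.surjective h
  have hg : Mgrp.reduce p k g.x ≠ 0 := fun h0 => hh (Mgrp.mulEquiv_mem_closure h0)
  have hidx : (Subgroup.zpowers (e g)).index = p := by
    have hmap := Subgroup.index_map_equiv (Subgroup.zpowers g) e
    rw [MonoidHom.map_zpowers] at hmap
    exact hmap.trans (Mgrp.Model.index_zpowers hodd hg)
  refine ⟨Subgroup.centralizer_eq_zpowers_of_index_prime (x := e (Mgrp.Model.b p k))
    (by rwa [hidx]) ?_, hidx⟩
  rw [commute_map_iff e.injective]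
  exact Mgrp.Model.not_commute_b hg
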